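/- Let n_1, …, n_d be positive integers, n = n_1⋯n_d, and V ∈ ℝⁿ. Suppose (x_1, …, x_d), with x_s ∈ ℝ^{n_s} all nonzero, is a local minimizer of the function F(x_1, …, x_d) = ‖V − x_1 ⊗ ⋯ ⊗ x_d‖. Then the stationarity equations hold: for every s ∈ [1,d], x_s = (1/∏_{i≠s}‖x_i‖²) · [ (x_1 ⊗ ⋯ ⊗ x_{s−1})ᵀ ⊗ I_{n_s} ⊗ (x_{s+1} ⊗ ⋯ ⊗ x_d)ᵀ ] V (where an empty Kronecker product is interpreted as the 1×1 identity). -/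

import Mathlib

/-- The `s`-th mixed-radix digit (0-indexed) of an index `k ∈ Fin (n₁⋯n_d)`. -/
def digitFin {d : ℕ} (n : Fin d → ℕ) (s : Fin d) (k : Fin (∏ t, n t)) : Fin (n s) :=
  ⟨(k.val / ∏ t ∈ Finset.Ioi s, n t) % n s,
   Nat.mod_lt _ (Nat.pos_of_ne_zero fun h0 => by
     have hk : (0 : ℕ) < ∏ t, n t := Nat.lt_of_le_of_lt (Nat.zero_le _) k.isLt
     rw [Finset.prod_eq_zero (Finset.mem_univ s) h0] at hk
     exact Nat.lt_irrefl 0 hk)⟩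

/-- The iterated Kronecker product `x₁ ⊗ x₂ ⊗ ⋯ ⊗ x_d` of column vectors
`x_s ∈ ℝ^{n_s}`, as a vector in `ℝ^{n₁⋯n_d}` (big-endian mixed-radix indexing). -/
noncomputable def bigKron {d : ℕ} (n : Fin d → ℕ)
    (x : ∀ s, EuclideanSpace ℝ (Fin (n s))) :
    EuclideanSpace ℝ (Fin (∏ t, n t)) :=
  WithLp.toLp 2 (fun k => ∏ s, x s (digitFin n s k))

/-- The matrix `(x₁ ⊗ ⋯ ⊗ x_{s−1})ᵀ ⊗ I_{n_s} ⊗ (x_{s+1} ⊗ ⋯ ⊗ x_d)ᵀ`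
(an `n_s × (n₁⋯n_d)` matrix, empty Kronecker products being `1×1` identities)
applied to `V ∈ ℝ^{n₁⋯n_d}`: its `j`-th entry is
`∑_{k : s-th digit of k = j} (∏_{i≠s} (x_i)_{digit_i k}) · V_k`. -/
noncomputable def midProj {d : ℕ} (n : Fin d → ℕ)
    (x : ∀ s, EuclideanSpace ℝ (Fin (n s))) (s : Fin d)
    (V : EuclideanSpace ℝ (Fin (∏ t, n t))) :
    EuclideanSpace ℝ (Fin (n s)) :=
  WithLp.toLp 2 fun j => ∑ k : Fin (∏ t, n t),
    (if digitFin n s k = j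
      then ∏ i ∈ Finset.univ.erase s, x i (digitFin n i k) else 0) * V k

/-!
Moving only the `s`-th factor along `x_s + t h` moves `x₁ ⊗ ⋯ ⊗ x_d` along a line, since the
Kronecker product is linear in each factor; so local minimality makes the residual
`V − x₁ ⊗ ⋯ ⊗ x_d` orthogonal to `x₁ ⊗ ⋯ ⊗ h ⊗ ⋯ ⊗ x_d` for every `h`. The matrix
`(x₁ ⊗ ⋯ ⊗ x_{s−1})ᵀ ⊗ I ⊗ (x_{s+1} ⊗ ⋯ ⊗ x_d)ᵀ` is the adjoint of `h ↦ x₁ ⊗ ⋯ ⊗ h ⊗ ⋯ ⊗ x_d`,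
and inner products of Kronecker products factor, so testing against every `h` gives
`[(x₁ ⊗ ⋯ ⊗ x_{s−1})ᵀ ⊗ I ⊗ (x_{s+1} ⊗ ⋯ ⊗ x_d)ᵀ] V = (∏_{i≠s} ‖x_i‖²) x_s`.
-/

open Finset

theorem inner_eq_zero_of_isLocalMin_norm_sub_smul {E : Type*} [NormedAddCommGroup E]
    [InnerProductSpace ℝ E] {a b : E} (h : IsLocalMin (fun t : ℝ => ‖a - t • b‖) 0) :
    inner ℝ a b = 0 := by
  have hsq : IsLocalMin (fun t : ℝ => ‖a - t • b‖ ^ 2) 0 :=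
    h.mono fun _ ht => pow_le_pow_left₀ (norm_nonneg _) ht 2
  have hderiv : HasDerivAt (fun t : ℝ => ‖a - t • b‖ ^ 2) (-(2 * inner ℝ a b)) 0 :=
    (((hasDerivAt_id (0 : ℝ)).smul_const b).const_sub a).norm_sq.congr_deriv (by simp)
  simpa using hsq.hasDerivAt_eq_zero hderiv

section LeadingDigit

variable {d : ℕ} (n : Fin (d + 1) → ℕ)

def leadingDigitEquiv : Fin (n 0) × Fin (∏ i : Fin d, n i.succ) ≃ Fin (∏ i, n i) :=
  finProdFinEquiv.trans (finCongr (Fin.prod_univ_succ n).symm)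

theorem val_leadingDigitEquiv (q : Fin (n 0)) (r : Fin (∏ i : Fin d, n i.succ)) :
    (leadingDigitEquiv n (q, r) : ℕ) = r + (∏ i : Fin d, n i.succ) * q := by
  simp [leadingDigitEquiv]

theorem digitFin_zero_leadingDigitEquiv (q : Fin (n 0)) (r : Fin (∏ i : Fin d, n i.succ)) :
    digitFin n 0 (leadingDigitEquiv n (q, r)) = q := by
  ext
  have hr : 0 < ∏ i : Fin d, n i.succ := r.pos
  simp only [digitFin, val_leadingDigitEquiv, Fin.prod_Ioi_zero]
  rw [Nat.add_mul_div_left _ _ hr, Nat.div_eq_of_lt r.isLt, zero_add, Nat.mod_eq_of_lt q.isLt]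

theorem digitFin_succ_leadingDigitEquiv (q : Fin (n 0)) (r : Fin (∏ i : Fin d, n i.succ))
    (s : Fin d) :
    digitFin n s.succ (leadingDigitEquiv n (q, r)) = digitFin (fun i => n i.succ) s r := by
  ext
  simp only [digitFin, val_leadingDigitEquiv, Fin.prod_Ioi_succ]
  obtain ⟨c, hc⟩ : (∏ t ∈ Ioi s, n t.succ) * n s.succ ∣ ∏ t : Fin d, n t.succ := by
    rw [prod_Ioi_mul_eq_prod_Ici s]
    exact prod_dvd_prod_of_subset _ _ _ (subset_univ _)
  have hW : 0 < ∏ t ∈ Ioi s, n t.succ :=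
    Nat.pos_of_ne_zero fun h => r.pos.ne' (by rw [hc, h, zero_mul, zero_mul])
  have hsplit : (∏ t : Fin d, n t.succ) * (q : ℕ)
      = (∏ t ∈ Ioi s, n t.succ) * (n s.succ * (c * q)) := by
    rw [hc]; ring
  rw [hsplit, Nat.add_mul_div_left _ _ hW, Nat.add_mul_mod_self_left]

end LeadingDigit

theorem sum_prod_digitFin {R : Type*} [CommSemiring R] :
    ∀ {d : ℕ} (n : Fin d → ℕ) (G : ∀ i, Fin (n i) → R),
      ∑ k, ∏ i, G i (digitFin n i k) = ∏ i, ∑ v, G i v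
  | 0, n, G => by simp
  | d + 1, n, G => by
    calc ∑ k, ∏ i, G i (digitFin n i k)
        = ∑ p, ∏ i, G i (digitFin n i (leadingDigitEquiv n p)) :=
          (Equiv.sum_comp _ _).symm
      _ = ∑ q, ∑ r, G 0 q * ∏ i : Fin d, G i.succ (digitFin (fun i => n i.succ) i r) := by
          simp only [Fintype.sum_prod_type, Fin.prod_univ_succ, digitFin_zero_leadingDigitEquiv,
            digitFin_succ_leadingDigitEquiv]
      _ = ∏ i, ∑ v, G i v := by
          simp_rw [← mul_sum, ← sum_mul, sum_prod_digitFin, Fin.prod_univ_succ]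

section Kronecker

variable {d : ℕ} {n : Fin d → ℕ}

theorem inner_bigKron (x y : ∀ s, EuclideanSpace ℝ (Fin (n s))) :
    inner ℝ (bigKron n x) (bigKron n y) = ∏ s, inner ℝ (x s) (y s) := by
  simp only [bigKron, PiLp.inner_apply, RCLike.inner_apply, conj_trivial, ← prod_mul_distrib]
  exact sum_prod_digitFin n fun s v => y s v * x s v

theorem bigKron_update_apply (x : ∀ s, EuclideanSpace ℝ (Fin (n s))) (s : Fin d)
    (y : EuclideanSpace ℝ (Fin (n s))) (k : Fin (∏ t, n t)) :
    bigKron n (Function.update x s y) k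
      = y (digitFin n s k) * ∏ i ∈ univ.erase s, x i (digitFin n i k) := by
  rw [bigKron, PiLp.toLp_apply,
    ← mul_prod_erase _ (fun i => Function.update x s y i (digitFin n i k)) (mem_univ s),
    Function.update_self]
  congr 1
  exact prod_congr rfl fun i hi => by rw [Function.update_of_ne (ne_of_mem_erase hi)]

theorem bigKron_update_add_smul (x : ∀ s, EuclideanSpace ℝ (Fin (n s))) (s : Fin d)
    (y h : EuclideanSpace ℝ (Fin (n s))) (t : ℝ) :
    bigKron n (Function.update x s (y + t • h))
      = bigKron n (Function.update x s y) + t • bigKron n (Function.update x s h) := by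
  ext k
  simp only [PiLp.add_apply, PiLp.smul_apply, smul_eq_mul, bigKron_update_apply]
  ring

theorem inner_bigKron_update (x : ∀ s, EuclideanSpace ℝ (Fin (n s))) (s : Fin d)
    (h : EuclideanSpace ℝ (Fin (n s))) :
    inner ℝ (bigKron n x) (bigKron n (Function.update x s h))
      = inner ℝ (x s) h * ∏ i ∈ univ.erase s, ‖x i‖ ^ 2 := by
  rw [inner_bigKron, ← mul_prod_erase _ _ (mem_univ s), Function.update_self]
  congr 1
  refine prod_congr rfl fun i hi => ?_
  rw [Function.update_of_ne (ne_of_mem_erase hi), real_inner_self_eq_norm_sq]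

theorem inner_midProj (x : ∀ s, EuclideanSpace ℝ (Fin (n s))) (s : Fin d)
    (V : EuclideanSpace ℝ (Fin (∏ t, n t))) (h : EuclideanSpace ℝ (Fin (n s))) :
    inner ℝ (midProj n x s V) h = inner ℝ V (bigKron n (Function.update x s h)) := by
  simp only [midProj, PiLp.inner_apply, RCLike.inner_apply, conj_trivial, bigKron_update_apply,
    mul_sum]
  rw [sum_comm]
  refine sum_congr rfl fun k _ => ?_
  simp only [ite_mul, zero_mul, mul_ite, mul_zero, sum_ite_eq, mem_univ, if_true]
  ring

theorem inner_sub_bigKron_update_eq_zero_of_isLocalMin {V : EuclideanSpace ℝ (Fin (∏ t, n t))}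
    {x : ∀ s, EuclideanSpace ℝ (Fin (n s))}
    (hloc : IsLocalMin (fun z : ∀ s, EuclideanSpace ℝ (Fin (n s)) => ‖V - bigKron n z‖) x)
    (s : Fin d) (h : EuclideanSpace ℝ (Fin (n s))) :
    inner ℝ (V - bigKron n x) (bigKron n (Function.update x s h)) = 0 := by
  set line : ℝ → ∀ s, EuclideanSpace ℝ (Fin (n s)) :=
    fun t => Function.update x s (x s + t • h)
  have hline : Continuous line := by fun_prop
  have hline_zero : line 0 = x := by simp [line]
  apply inner_eq_zero_of_isLocalMin_norm_sub_smul
  convert (hline_zero ▸ hloc).comp_continuous hline.continuousAt using 2 with t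
  simp only [Function.comp_apply, line, bigKron_update_add_smul, Function.update_eq_self,
    sub_add_eq_sub_sub]

end Kronecker

theorem NKP_stationarity_general {d : ℕ} (n : Fin d → ℕ)
    (V : EuclideanSpace ℝ (Fin (∏ t, n t)))
    (x : ∀ s, EuclideanSpace ℝ (Fin (n s))) (hx : ∀ s, x s ≠ 0)
    (hloc : IsLocalMin
      (fun z : ∀ s, EuclideanSpace ℝ (Fin (n s)) => ‖V - bigKron n z‖) x) :
    ∀ s : Fin d,
      x s = (∏ i ∈ Finset.univ.erase s, ‖x i‖ ^ 2)⁻¹ • midProj n x s V := by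
  intro s
  have hc : ∏ i ∈ univ.erase s, ‖x i‖ ^ 2 ≠ 0 :=
    prod_ne_zero_iff.mpr fun i _ => pow_ne_zero 2 (norm_ne_zero_iff.mpr (hx i))
  have hmid : midProj n x s V = (∏ i ∈ univ.erase s, ‖x i‖ ^ 2) • x s := by
    refine ext_inner_right ℝ fun h => ?_
    have horth := inner_sub_bigKron_update_eq_zero_of_isLocalMin hloc s h
    rw [inner_sub_left, sub_eq_zero] at horth
    rw [inner_midProj, horth, inner_bigKron_update, real_inner_smul_left, mul_comm]
  rw [hmid, inv_smul_smul₀ hc]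

/-- A local minimizer (with all factors nonzero) of the nearest Kronecker product
error `F(x₁,…,x_d) = ‖V − x₁ ⊗ ⋯ ⊗ x_d‖` satisfies the stationarity equations
`x_s = (1/∏_{i≠s}‖x_i‖²)·[(x₁⊗⋯⊗x_{s−1})ᵀ ⊗ I_{n_s} ⊗ (x_{s+1}⊗⋯⊗x_d)ᵀ] V`. -/
theorem NKP_stationarity {d : ℕ} (n : Fin d → ℕ) (hn : ∀ s, 0 < n s)
    (V : EuclideanSpace ℝ (Fin (∏ t, n t)))
    (x : ∀ s, EuclideanSpace ℝ (Fin (n s))) (hx : ∀ s, x s ≠ 0)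
    (hloc : IsLocalMin
      (fun z : ∀ s, EuclideanSpace ℝ (Fin (n s)) => ‖V - bigKron n z‖) x) :
    ∀ s : Fin d,
      x s = (∏ i ∈ Finset.univ.erase s, ‖x i‖ ^ 2)⁻¹ • midProj n x s V :=
  NKP_stationarity_general n V x hx hloc
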